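/- Let τ be the ℝ-algebra endomorphism of the polynomial ring over ℝ in the variables x_i, y_i (i ∈ ZMod n) determined by τ(x_i) = x_{1−i} and τ(y_i) = y_{−i}. Then for all polynomials f and g one has {τ(f), τ(g)} = −τ({f, g}); that is, τ is an anti-automorphism of the Poisson bracket. -/

import Mathlib

/-
`τ` is the renaming of variables along the involution `x_i ↦ x_{1-i}`, `y_i ↦ y_{-i}`, so it
commutes with partial derivatives up to relabelling the variable. The involution reverses the
direction of every edge `(i, i+1)` of both cycles (`(i, i+1) ↦ (k+1, k)` with `k = -i` for the
`x`'s and `k = -i-1` for the `y`'s), and the bracket is antisymmetric in the orientation of an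
edge, so after reindexing the sum each summand changes sign.
-/

open MvPolynomial

/-- The Poisson bracket on polynomials in the corner coordinates `x_i, y_i`
(`Sum.inl i ↦ x_i`, `Sum.inr i ↦ y_i`), determined by
`{x_i, x_{i+1}} = -x_i x_{i+1}`, `{y_i, y_{i+1}} = y_i y_{i+1}`. -/
noncomputable def pb {n : ℕ} [NeZero n]
    (f g : MvPolynomial (ZMod n ⊕ ZMod n) ℝ) : MvPolynomial (ZMod n ⊕ ZMod n) ℝ :=
  ∑ i : ZMod n,
    (X (Sum.inl i) * X (Sum.inl (i + 1)) *
        (pderiv (Sum.inl (i + 1)) f * pderiv (Sum.inl i) g -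
          pderiv (Sum.inl i) f * pderiv (Sum.inl (i + 1)) g) +
      X (Sum.inr i) * X (Sum.inr (i + 1)) *
        (pderiv (Sum.inr i) f * pderiv (Sum.inr (i + 1)) g -
          pderiv (Sum.inr (i + 1)) f * pderiv (Sum.inr i) g))

namespace PoissonReflection

variable {n : ℕ}

def reflect : ZMod n ⊕ ZMod n → ZMod n ⊕ ZMod n :=
  Sum.elim (fun i => Sum.inl (1 - i)) (fun i => Sum.inr (-i))

@[simp] lemma reflect_inl (i : ZMod n) : reflect (Sum.inl i) = Sum.inl (1 - i) := rfl

@[simp] lemma reflect_inr (i : ZMod n) : reflect (Sum.inr i) = Sum.inr (-i) := rfl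

lemma reflect_involutive : Function.Involutive (reflect (n := n)) := by
  rintro (i | i) <;> simp

lemma eq_rename_reflect
    (τ : MvPolynomial (ZMod n ⊕ ZMod n) ℝ →ₐ[ℝ] MvPolynomial (ZMod n ⊕ ZMod n) ℝ)
    (hτx : ∀ i : ZMod n, τ (X (Sum.inl i)) = X (Sum.inl (1 - i)))
    (hτy : ∀ i : ZMod n, τ (X (Sum.inr i)) = X (Sum.inr (-i))) :
    τ = rename reflect := by
  apply algHom_ext
  rintro (i | i) <;> simp [hτx, hτy]

lemma pderiv_reflect_rename (j : ZMod n ⊕ ZMod n) (p : MvPolynomial (ZMod n ⊕ ZMod n) ℝ) :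
    pderiv (reflect j) (rename reflect p) = rename reflect (pderiv j p) :=
  pderiv_rename reflect_involutive.injective j p

lemma pderiv_inl_rename_reflect (i : ZMod n) (p : MvPolynomial (ZMod n ⊕ ZMod n) ℝ) :
    pderiv (Sum.inl (1 - i)) (rename reflect p) = rename reflect (pderiv (Sum.inl i) p) :=
  pderiv_reflect_rename (Sum.inl i) p

lemma pderiv_inr_rename_reflect (i : ZMod n) (p : MvPolynomial (ZMod n ⊕ ZMod n) ℝ) :
    pderiv (Sum.inr (-i)) (rename reflect p) = rename reflect (pderiv (Sum.inr i) p) :=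
  pderiv_reflect_rename (Sum.inr i) p

variable [NeZero n] (f g : MvPolynomial (ZMod n ⊕ ZMod n) ℝ)

lemma sum_xTerm_rename_reflect :
    ∑ k : ZMod n, X (Sum.inl k) * X (Sum.inl (k + 1)) *
        (pderiv (Sum.inl (k + 1)) (rename reflect f) * pderiv (Sum.inl k) (rename reflect g) -
          pderiv (Sum.inl k) (rename reflect f) * pderiv (Sum.inl (k + 1)) (rename reflect g)) =
      ∑ i : ZMod n, -rename reflect (X (Sum.inl i) * X (Sum.inl (i + 1)) *
        (pderiv (Sum.inl (i + 1)) f * pderiv (Sum.inl i) g -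
          pderiv (Sum.inl i) f * pderiv (Sum.inl (i + 1)) g)) := by
  refine (Fintype.sum_equiv (Equiv.neg (ZMod n)) _ _ fun i => ?_).symm
  have h₁ : -i + 1 = 1 - i := by ring
  have h₀ : -i = 1 - (i + 1) := by ring
  simp only [Equiv.neg_apply, h₁, map_mul, map_sub, rename_X, reflect_inl,
    pderiv_inl_rename_reflect]
  rw [h₀, pderiv_inl_rename_reflect, pderiv_inl_rename_reflect]
  ring

lemma sum_yTerm_rename_reflect :
    ∑ k : ZMod n, X (Sum.inr k) * X (Sum.inr (k + 1)) *
        (pderiv (Sum.inr k) (rename reflect f) * pderiv (Sum.inr (k + 1)) (rename reflect g) -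
          pderiv (Sum.inr (k + 1)) (rename reflect f) * pderiv (Sum.inr k) (rename reflect g)) =
      ∑ i : ZMod n, -rename reflect (X (Sum.inr i) * X (Sum.inr (i + 1)) *
        (pderiv (Sum.inr i) f * pderiv (Sum.inr (i + 1)) g -
          pderiv (Sum.inr (i + 1)) f * pderiv (Sum.inr i) g)) := by
  refine (Fintype.sum_equiv (Equiv.subLeft (-1 : ZMod n)) _ _ fun i => ?_).symm
  have h₁ : -1 - i + 1 = -i := by ring
  have h₀ : -1 - i = -(i + 1) := by ring
  simp only [Equiv.subLeft_apply, h₁, map_mul, map_sub, rename_X, reflect_inr,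
    pderiv_inr_rename_reflect]
  rw [h₀, pderiv_inr_rename_reflect, pderiv_inr_rename_reflect]
  ring

lemma pb_rename_reflect : pb (rename reflect f) (rename reflect g) = -rename reflect (pb f g) := by
  rw [pb, pb, map_sum, ← Finset.sum_neg_distrib]
  simp only [map_add, neg_add, Finset.sum_add_distrib]
  rw [sum_xTerm_rename_reflect, sum_yTerm_rename_reflect]

end PoissonReflection

open PoissonReflection in
theorem stmt_7 (n : ℕ) [NeZero n]
    (τ : MvPolynomial (ZMod n ⊕ ZMod n) ℝ →ₐ[ℝ] MvPolynomial (ZMod n ⊕ ZMod n) ℝ)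
    (hτx : ∀ i : ZMod n, τ (X (Sum.inl i)) = X (Sum.inl (1 - i)))
    (hτy : ∀ i : ZMod n, τ (X (Sum.inr i)) = X (Sum.inr (-i)))
    (f g : MvPolynomial (ZMod n ⊕ ZMod n) ℝ) :
    pb (τ f) (τ g) = -τ (pb f g) := by
  rw [eq_rename_reflect τ hτx hτy]
  exact pb_rename_reflect f g
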